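/- Let N* be a Poisson random variable of parameter ξ conditioned on {N* ≥ 2}, and let X be an (unconditioned) Poisson random variable of parameter ξ. If 3e^{-ξ} ≥ 2, then for every integer k ≥ 0, P(N* - 2 ≥ k) ≤ P(X ≥ k); i.e., N* - 2 is stochastically dominated by X. -/
import Mathlib

set_option maxHeartbeats 1000000

private lemma exp_tsum' (x : ℝ) : Real.exp x = ∑' n : ℕ, x ^ n / n.factorial := by
  rw [Real.exp_eq_exp_ℝ, NormedSpace.exp_eq_tsum_div]

private lemma fact3 (k : ℕ) : ∀ n : ℕ, (k + 2).factorial * 3 ^ n ≤ (n + k + 2).factorial := by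
  intro n
  induction n with
  | zero => simp
  | succ n ih =>
      have h1 : (n + 1 + k + 2).factorial = (n + k + 3) * (n + k + 2).factorial := by
        have : n + 1 + k + 2 = (n + k + 2) + 1 := by omega
        rw [this, Nat.factorial_succ]
      rw [h1, pow_succ]
      calc (k + 2).factorial * (3 ^ n * 3) = ((k + 2).factorial * 3 ^ n) * 3 := by ring
        _ ≤ (n + k + 2).factorial * 3 := Nat.mul_le_mul ih le_rfl
        _ ≤ (n + k + 3) * (n + k + 2).factorial := by
            rw [mul_comm]; exact Nat.mul_le_mul (by omega) le_rfl

/-- Stochastic domination of the shifted conditioned Poisson variable: if `N*` is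
Poisson(ξ) conditioned on `N* ≥ 2` (so that `P(N* - 2 = k) = Z_ξ⁻¹ ξ^k/(k+2)!` with
`Z_ξ = ξ⁻²(e^ξ - 1 - ξ)`) and `X` is Poisson(ξ), then whenever `3 e^{-ξ} ≥ 2`, for
every `k`, `P(N* - 2 ≥ k) ≤ P(X ≥ k)`. -/
theorem stmt3 (ξ : ℝ) (hξ : 0 < ξ) (h : 2 ≤ 3 * Real.exp (-ξ)) (k : ℕ) :
    (∑' j : ℕ, if k ≤ j then
        (ξ ^ (-2 : ℤ) * (Real.exp ξ - 1 - ξ))⁻¹ * ξ ^ j / (Nat.factorial (j + 2)) else 0)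
      ≤ ∑' j : ℕ, if k ≤ j then Real.exp (-ξ) * ξ ^ j / (Nat.factorial j) else 0 := by
  set c : ℝ := (ξ ^ (-2 : ℤ) * (Real.exp ξ - 1 - ξ))⁻¹ with hc
  have hexpneg : (2 : ℝ) / 3 ≤ Real.exp (-ξ) := by linarith
  have hquad : 1 + ξ + ξ ^ 2 / 2 ≤ Real.exp ξ := by
    have := Real.sum_le_exp_of_nonneg hξ.le 3
    simp [Finset.sum_range_succ, Nat.factorial] at this
    nlinarith [this]
  have hD : 0 < Real.exp ξ - 1 - ξ := by nlinarith
  have hz2 : (ξ : ℝ) ^ (-2 : ℤ) = (ξ ^ 2)⁻¹ := by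
    rw [zpow_neg, zpow_two]; ring_nf
  have hceq : c = ξ ^ 2 / (Real.exp ξ - 1 - ξ) := by
    rw [hc, hz2, mul_inv, inv_inv, div_eq_mul_inv]
  have hc0 : 0 < c := by rw [hceq]; positivity
  have hc2 : c ≤ 2 := by
    rw [hceq, div_le_iff₀ hD]; nlinarith
  have hξ3 : Real.exp ξ ≤ 3 / 2 := by
    have he : (2 : ℝ) / 3 ≤ (Real.exp ξ)⁻¹ := by rw [← Real.exp_neg]; exact hexpneg
    have hp : 0 < Real.exp ξ := Real.exp_pos ξ
    have h1 : (Real.exp ξ)⁻¹ * Real.exp ξ = 1 := inv_mul_cancel₀ hp.ne'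
    nlinarith [mul_le_mul_of_nonneg_right he hp.le]
  have hξhalf : ξ ≤ 1 / 2 := by
    have := Real.add_one_le_exp ξ
    linarith
  -- summability facts
  have hS0 : Summable fun j : ℕ => ξ ^ j / (j.factorial : ℝ) :=
    Real.summable_pow_div_factorial ξ
  have hfn : ∀ j : ℕ, (0:ℝ) ≤ c * ξ ^ j / ((j + 2).factorial : ℝ) := fun j =>
    div_nonneg (mul_nonneg hc0.le (pow_nonneg hξ.le j)) (Nat.cast_nonneg _)
  have hgn : ∀ j : ℕ, (0:ℝ) ≤ Real.exp (-ξ) * ξ ^ j / (j.factorial : ℝ) := fun j =>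
    div_nonneg (mul_nonneg (Real.exp_pos _).le (pow_nonneg hξ.le j)) (Nat.cast_nonneg _)
  have hSf : Summable fun j : ℕ => c * ξ ^ j / ((j + 2).factorial : ℝ) := by
    refine Summable.of_nonneg_of_le hfn (fun j => ?_) (hS0.mul_left c)
    rw [mul_div_assoc]
    refine mul_le_mul_of_nonneg_left ?_ hc0.le
    refine div_le_div_of_nonneg_left (by positivity) (by positivity) ?_
    exact_mod_cast Nat.factorial_le (by omega)
  have hSg : Summable fun j : ℕ => Real.exp (-ξ) * ξ ^ j / (j.factorial : ℝ) := by
    simpa [mul_div_assoc] using hS0.mul_left (Real.exp (-ξ))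
  have hSfif : Summable fun j : ℕ =>
      if k ≤ j then c * ξ ^ j / ((j + 2).factorial : ℝ) else 0 := by
    refine Summable.of_nonneg_of_le (fun j => ?_) (fun j => ?_) hSf
    · split
      · exact hfn j
      · exact le_rfl
    · split
      · exact le_rfl
      · exact hfn j
  have hSgif : Summable fun j : ℕ =>
      if k ≤ j then Real.exp (-ξ) * ξ ^ j / (j.factorial : ℝ) else 0 := by
    refine Summable.of_nonneg_of_le (fun j => ?_) (fun j => ?_) hSg
    · split
      · exact hgn j
      · exact le_rfl
    · split
      · exact le_rfl
      · exact hgn j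
  rcases Nat.eq_zero_or_pos k with hk | hk
  · -- k = 0 : both sides equal 1
    subst hk
    simp only [Nat.zero_le, if_true]
    have hrhs : (∑' j : ℕ, Real.exp (-ξ) * ξ ^ j / (j.factorial : ℝ)) = 1 := by
      have : (∑' j : ℕ, Real.exp (-ξ) * ξ ^ j / (j.factorial : ℝ))
          = Real.exp (-ξ) * ∑' j : ℕ, ξ ^ j / (j.factorial : ℝ) := by
        rw [← tsum_mul_left]; congr 1 with j; ring
      rw [this, ← exp_tsum', ← Real.exp_add]; simp
    have hshift : ∑' j : ℕ, ξ ^ (j + 2) / ((j + 2).factorial : ℝ)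
        = Real.exp ξ - 1 - ξ := by
      have h2 := Summable.sum_add_tsum_nat_add (f := fun n : ℕ => ξ ^ n / (n.factorial : ℝ)) 2 hS0
      rw [← exp_tsum'] at h2
      have hfin : ∑ i ∈ Finset.range 2, ξ ^ i / (i.factorial : ℝ) = 1 + ξ := by
        simp [Finset.sum_range_succ]
      rw [hfin] at h2
      linarith
    have hsum2 : ∑' j : ℕ, ξ ^ j / ((j + 2).factorial : ℝ)
        = (Real.exp ξ - 1 - ξ) / ξ ^ 2 := by
      have : ∑' j : ℕ, ξ ^ (j + 2) / ((j + 2).factorial : ℝ)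
          = ξ ^ 2 * ∑' j : ℕ, ξ ^ j / ((j + 2).factorial : ℝ) := by
        rw [← tsum_mul_left]; congr 1 with j; rw [pow_add]; ring
      rw [this] at hshift
      field_simp
      linarith [hshift]
    have hlhs : (∑' j : ℕ, c * ξ ^ j / ((j + 2).factorial : ℝ)) = 1 := by
      have : (∑' j : ℕ, c * ξ ^ j / ((j + 2).factorial : ℝ))
          = c * ∑' j : ℕ, ξ ^ j / ((j + 2).factorial : ℝ) := by
        rw [← tsum_mul_left]; congr 1 with j; ring
      rw [this, hsum2, hceq]
      field_simp
    rw [hlhs, hrhs]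
  · -- k ≥ 1
    have hterm : ∀ n : ℕ, (if k ≤ n + k then c * ξ ^ (n + k) / (((n + k) + 2).factorial : ℝ) else 0)
        ≤ (c * ξ ^ k / ((k + 2).factorial : ℝ)) * (ξ / 3) ^ n := by
      intro n
      rw [if_pos (Nat.le_add_left k n)]
      have hfac : ((k + 2).factorial : ℝ) * 3 ^ n ≤ ((n + k + 2).factorial : ℝ) := by
        exact_mod_cast fact3 k n
      have hRHSeq : (c * ξ ^ k / ((k + 2).factorial : ℝ)) * (ξ / 3) ^ n
          = (c * ξ ^ (n + k)) / (((k + 2).factorial : ℝ) * 3 ^ n) := by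
        rw [div_pow, div_mul_div_comm, pow_add]; ring
      rw [hRHSeq]
      exact div_le_div_of_nonneg_left (mul_nonneg hc0.le (pow_nonneg hξ.le _))
        (by positivity) hfac
    have hgeo : Summable fun n : ℕ => (c * ξ ^ k / ((k + 2).factorial : ℝ)) * (ξ / 3) ^ n := by
      apply Summable.mul_left
      exact summable_geometric_of_lt_one (by positivity) (by linarith)
    -- rewrite LHS as shifted sum
    have hsplit := Summable.sum_add_tsum_nat_add
      (f := fun j : ℕ => if k ≤ j then c * ξ ^ j / ((j + 2).factorial : ℝ) else 0) k hSfif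
    have hzero : (∑ i ∈ Finset.range k,
        if k ≤ i then c * ξ ^ i / ((i + 2).factorial : ℝ) else 0) = 0 := by
      apply Finset.sum_eq_zero
      intro i hi
      have := Finset.mem_range.mp hi
      rw [if_neg (by omega)]
    rw [hzero, zero_add] at hsplit
    rw [← hsplit]
    -- bound shifted sum by geometric series
    have hSshift : Summable fun n : ℕ =>
        if k ≤ n + k then c * ξ ^ (n + k) / (((n + k) + 2).factorial : ℝ) else 0 :=
      hSfif.comp_injective (add_left_injective k)
    have hbound : (∑' n : ℕ, if k ≤ n + k then c * ξ ^ (n + k) / (((n + k) + 2).factorial : ℝ) else 0)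
        ≤ (c * ξ ^ k / ((k + 2).factorial : ℝ)) * (1 - ξ / 3)⁻¹ := by
      have := Summable.tsum_le_tsum hterm hSshift hgeo
      rwa [tsum_mul_left, tsum_geometric_of_lt_one (by positivity) (by linarith)] at this
    refine le_trans hbound ?_
    -- RHS is at least its term at j = k
    have hrhs : Real.exp (-ξ) * ξ ^ k / (k.factorial : ℝ)
        ≤ ∑' j : ℕ, if k ≤ j then Real.exp (-ξ) * ξ ^ j / (j.factorial : ℝ) else 0 := by
      have := Summable.le_tsum hSgif k (fun j _ => by split <;> positivity)
      simpa using this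
    refine le_trans ?_ hrhs
    -- final arithmetic
    have hfac2 : ((k + 2).factorial : ℝ) = (k + 2) * (k + 1) * (k.factorial : ℝ) := by
      push_cast [Nat.factorial_succ]
      ring
    have hm : (6 : ℝ) ≤ (k + 2) * (k + 1) := by
      have : (1 : ℝ) ≤ k := by exact_mod_cast hk
      nlinarith
    have hinv : (1 - ξ / 3)⁻¹ ≤ 6 / 5 := by
      rw [inv_le_comm₀ (by linarith) (by norm_num)]
      linarith
    have hA : (0 : ℝ) < ξ ^ k / (k.factorial : ℝ) := by positivity
    rw [hfac2]
    have key : c * (1 - ξ / 3)⁻¹ ≤ Real.exp (-ξ) * ((k + 2) * (k + 1)) := by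
      have h1 : c * (1 - ξ / 3)⁻¹ ≤ 2 * (6 / 5) := by
        apply mul_le_mul hc2 hinv (inv_nonneg.mpr (by linarith)) (by norm_num)
      have h2 : (4 : ℝ) ≤ Real.exp (-ξ) * ((k + 2) * (k + 1)) := by
        calc (4 : ℝ) = (2 / 3) * 6 := by norm_num
          _ ≤ Real.exp (-ξ) * ((k + 2) * (k + 1)) := by
              apply mul_le_mul hexpneg hm (by norm_num) (Real.exp_pos _).le
      linarith
    have hkf : (0 : ℝ) < (k.factorial : ℝ) := by positivity
    have hK : (0 : ℝ) < (k + 2) * (k + 1) := by nlinarith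
    rw [div_mul_eq_mul_div, div_le_div_iff₀ (by positivity) hkf]
    calc c * ξ ^ k * (1 - ξ / 3)⁻¹ * (k.factorial : ℝ)
        = (c * (1 - ξ / 3)⁻¹) * (ξ ^ k * (k.factorial : ℝ)) := by ring
      _ ≤ (Real.exp (-ξ) * ((k + 2) * (k + 1))) * (ξ ^ k * (k.factorial : ℝ)) := by
          apply mul_le_mul_of_nonneg_right key (by positivity)
      _ = Real.exp (-ξ) * ξ ^ k * ((k + 2) * (k + 1) * (k.factorial : ℝ)) := by ring
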